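/- arXiv:1701.02879 — 2 statements merged into one kernel-verified Lean document; each statement's English description precedes it below -/
import Mathlib

section
/- Let ≿ be a preference relation (reflexive and transitive) on the set 𝒰 of bounded real sequences satisfying axioms A1, A2 and A3. Then ≿ is complete on 𝒰₊: for all u, v ∈ 𝒰₊, if u ≿ v does not hold, then v ≻ u. -/
open Filter Finset Topology

/-- A bounded real sequence (an element of 𝒰). Index `t : ℕ` represents time `t+1`. -/
def Bdd (u : ℕ → ℝ) : Prop := ∃ C : ℝ, ∀ t, |u t| ≤ C

/-- Partial sum `∑_{t=1}^n u_t`. -/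
noncomputable def psum (u : ℕ → ℝ) (n : ℕ) : ℝ := ∑ t ∈ Finset.range n, u t

/-- Cesàro average `(1/n) ∑_{T=1}^n ∑_{t=1}^T u_t`. -/
noncomputable def cesaroAvg (u : ℕ → ℝ) (n : ℕ) : ℝ :=
  (∑ T ∈ Finset.range n, psum u (T + 1)) / n

/-- The series `∑ u_t` is Cesàro-summable. -/
def CesaroSummable (u : ℕ → ℝ) : Prop :=
  ∃ L : ℝ, Filter.Tendsto (cesaroAvg u) Filter.atTop (nhds L)

/-- The series `∑ u_t` has bounded partial sums. -/
def BddPartialSums (u : ℕ → ℝ) : Prop := ∃ C : ℝ, ∀ n, |psum u n| ≤ C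

/-- The long-run average of `u` exists and equals `a`. -/
def AvgTo (u : ℕ → ℝ) (a : ℝ) : Prop :=
  Filter.Tendsto (fun n : ℕ => psum u n / n) Filter.atTop (nhds a)

/-- The sequence `(c, u_1, u_2, …)`. -/
def cons (c : ℝ) (u : ℕ → ℝ) : ℕ → ℝ := fun t => if t = 0 then c else u (t - 1)

/-- The discounted sum `∑_{t=1}^∞ β^t d_t`. -/
noncomputable def discSum (d : ℕ → ℝ) (β : ℝ) : ℝ := ∑' t : ℕ, β ^ (t + 1) * d t

/-- The Blackwell relation `u ≿_B v`. -/
def BlackwellGE (u v : ℕ → ℝ) : Prop :=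
  0 ≤ Filter.liminf (fun β => discSum (u - v) β) (nhdsWithin 1 (Set.Iio 1))

/-- Veinott's average overtaking relation `u ≿_V v`. -/
def VeinottGE (u v : ℕ → ℝ) : Prop :=
  0 ≤ Filter.liminf (cesaroAvg (u - v)) Filter.atTop

/-- Reflexivity of the preference relation on 𝒰. -/
def ReflOn (R : (ℕ → ℝ) → (ℕ → ℝ) → Prop) : Prop := ∀ u, Bdd u → R u u

/-- Transitivity of the preference relation on 𝒰. -/
def TransOn (R : (ℕ → ℝ) → (ℕ → ℝ) → Prop) : Prop :=
  ∀ u v w, Bdd u → Bdd v → Bdd w → R u v → R v w → R u w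

/-- Strict preference `u ≻ v`. -/
def StrictPref (R : (ℕ → ℝ) → (ℕ → ℝ) → Prop) (u v : ℕ → ℝ) : Prop := R u v ∧ ¬ R v u

/-- Axiom A1: `u > v` implies `u ≻ v`. -/
def AxiomA1 (R : (ℕ → ℝ) → (ℕ → ℝ) → Prop) : Prop :=
  ∀ u v, Bdd u → Bdd v → (∀ t, v t ≤ u t) → (∃ t, v t < u t) → StrictPref R u v

/-- Axiom A2: `u ≿ v` implies `u + α ≿ v + α`. -/
def AxiomA2 (R : (ℕ → ℝ) → (ℕ → ℝ) → Prop) : Prop :=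
  ∀ u v α, Bdd u → Bdd v → Bdd α → R u v → R (u + α) (v + α)

/-- Axiom A3: if the long-run average `ū` exists then `(ū, u) ∼ u`. -/
def AxiomA3 (R : (ℕ → ℝ) → (ℕ → ℝ) → Prop) : Prop :=
  ∀ u a, Bdd u → AvgTo u a → (R (cons a u) u ∧ R u (cons a u))

/-- `w` is eventually periodic with period `p` from time `T` onward. -/
def EvPeriodicFrom (w : ℕ → ℝ) (p T : ℕ) : Prop := 1 ≤ p ∧ ∀ t, T ≤ t → w (t + p) = w t

/-- `w` is eventually periodic. -/
def EvPeriodic (w : ℕ → ℝ) : Prop := ∃ p T : ℕ, EvPeriodicFrom w p T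

/-- The set 𝒰₊: bounded streams of the form `w + Δ`, `w` eventually periodic and
`∑ Δ_t` Cesàro-summable with bounded partial sums. -/
def UPlus (u : ℕ → ℝ) : Prop :=
  Bdd u ∧ ∃ w Δ : ℕ → ℝ, u = w + Δ ∧ EvPeriodic w ∧ CesaroSummable Δ ∧ BddPartialSums Δ

/-- An `S × S` row-stochastic matrix. -/
def RowStochastic {S : ℕ} (Q : Matrix (Fin S) (Fin S) ℝ) : Prop :=
  (∀ i j, 0 ≤ Q i j) ∧ ∀ i, ∑ j, Q i j = 1

/-- 𝒰_stat: streams generated by stationary policies of finite MDPs,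
`u_t = (Q^{t-1} · R)_s` (here `u t` is `u_{t+1}`, so `u t = (Q^t · R)_s`). -/
def UStat (u : ℕ → ℝ) : Prop :=
  ∃ (S : ℕ) (_ : 0 < S) (Q : Matrix (Fin S) (Fin S) ℝ) (R : Fin S → ℝ) (s : Fin S),
    RowStochastic Q ∧ ∀ t : ℕ, u t = ((Q ^ t).mulVec R) s

/-!
Write `d = u - v ∈ 𝒰₊` as `c + Δ`, where `c` is the period mean of the periodic part and the
series `∑ Δ_t` has bounded partial sums `S` and Cesàro sum `L`. If `L = 0`, A3 applied to `S`
gives `(0, S) ∼ S`, and subtracting `(0, S)` (A2) leaves `Δ ∼ 0`. Hence `d ∼ c + h` for any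
`h` with Cesàro sum `L`, e.g. `L/n` paid in each of the first `n` periods. For `n` large,
`c + h` has a constant sign, so A1 compares it, and therefore `d`, with `0`; A2 then moves
the comparison back to `u` and `v`.
-/

section Bdd

lemma bdd_const (c : ℝ) : Bdd (fun _ => c) := ⟨|c|, fun _ => le_rfl⟩

lemma bdd_zero : Bdd (0 : ℕ → ℝ) := bdd_const 0

variable {a b : ℕ → ℝ}

lemma Bdd.add (ha : Bdd a) (hb : Bdd b) : Bdd (a + b) := by
  obtain ⟨C, hC⟩ := ha
  obtain ⟨D, hD⟩ := hb
  exact ⟨C + D, fun t => (abs_add_le _ _).trans (add_le_add (hC t) (hD t))⟩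

lemma Bdd.neg (ha : Bdd a) : Bdd (-a) := by
  obtain ⟨C, hC⟩ := ha
  exact ⟨C, fun t => by simpa using hC t⟩

lemma Bdd.sub (ha : Bdd a) (hb : Bdd b) : Bdd (a - b) := by
  simpa [sub_eq_add_neg] using ha.add hb.neg

lemma Bdd.tendsto_div_natCast (ha : Bdd a) :
    Tendsto (fun n : ℕ => a n / n) atTop (𝓝 0) := by
  obtain ⟨C, hC⟩ := ha
  refine squeeze_zero_norm (fun n => ?_) (tendsto_const_div_atTop_nhds_zero_nat C)
  rw [Real.norm_eq_abs, abs_div, Nat.abs_cast]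
  exact div_le_div_of_nonneg_right (hC n) n.cast_nonneg

end Bdd

section PartialSums

variable {a b : ℕ → ℝ}

lemma psum_zero (a : ℕ → ℝ) : psum a 0 = 0 := Finset.sum_range_zero a

lemma psum_succ (a : ℕ → ℝ) (n : ℕ) : psum a (n + 1) = psum a n + a n :=
  Finset.sum_range_succ a n

lemma psum_add_length (a : ℕ → ℝ) (m n : ℕ) :
    psum a (m + n) = psum a m + ∑ i ∈ range n, a (m + i) :=
  Finset.sum_range_add a m n

lemma psum_add (a b : ℕ → ℝ) (n : ℕ) : psum (a + b) n = psum a n + psum b n :=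
  Finset.sum_add_distrib

lemma psum_sub (a b : ℕ → ℝ) (n : ℕ) : psum (a - b) n = psum a n - psum b n :=
  Finset.sum_sub_distrib ..

lemma psum_sub_const (a : ℕ → ℝ) (c : ℝ) (n : ℕ) :
    psum (fun t => a t - c) n = psum a n - n * c := by
  simp [psum, Finset.sum_sub_distrib]

lemma cesaroAvg_add (a b : ℕ → ℝ) (n : ℕ) :
    cesaroAvg (a + b) n = cesaroAvg a n + cesaroAvg b n := by
  simp only [cesaroAvg, psum_add, Finset.sum_add_distrib, add_div]

lemma cesaroAvg_sub (a b : ℕ → ℝ) (n : ℕ) :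
    cesaroAvg (a - b) n = cesaroAvg a n - cesaroAvg b n := by
  simp only [cesaroAvg, psum_sub, Finset.sum_sub_distrib, sub_div]

lemma tendsto_cesaroAvg_iff {a : ℕ → ℝ} {L : ℝ} :
    Tendsto (cesaroAvg a) atTop (𝓝 L) ↔ AvgTo (fun t => psum a (t + 1)) L :=
  Iff.rfl

lemma CesaroSummable.add (ha : CesaroSummable a) (hb : CesaroSummable b) :
    CesaroSummable (a + b) := by
  obtain ⟨L, hL⟩ := ha
  obtain ⟨M, hM⟩ := hb
  exact ⟨L + M, by simpa only [← cesaroAvg_add] using hL.add hM⟩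

lemma CesaroSummable.sub (ha : CesaroSummable a) (hb : CesaroSummable b) :
    CesaroSummable (a - b) := by
  obtain ⟨L, hL⟩ := ha
  obtain ⟨M, hM⟩ := hb
  exact ⟨L - M, by simpa only [← cesaroAvg_sub] using hL.sub hM⟩

lemma BddPartialSums.add (ha : BddPartialSums a) (hb : BddPartialSums b) :
    BddPartialSums (a + b) := by
  show Bdd (psum (a + b))
  rw [funext (psum_add a b)]
  exact Bdd.add ha hb

lemma BddPartialSums.sub (ha : BddPartialSums a) (hb : BddPartialSums b) :
    BddPartialSums (a - b) := by
  show Bdd (psum (a - b))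
  rw [funext (psum_sub a b)]
  exact Bdd.sub ha hb

lemma BddPartialSums.bdd (ha : BddPartialSums a) : Bdd a := by
  obtain ⟨C, hC⟩ := ha
  refine ⟨C + C, fun t => ?_⟩
  rw [show a t = psum a (t + 1) - psum a t by rw [psum_succ]; ring]
  exact (abs_sub _ _).trans (add_le_add (hC _) (hC _))

lemma BddPartialSums.bdd_psum_succ (ha : BddPartialSums a) :
    Bdd (fun t => psum a (t + 1)) := by
  obtain ⟨C, hC⟩ := ha
  exact ⟨C, fun t => hC (t + 1)⟩

end PartialSums

noncomputable def periodMean (z : ℕ → ℝ) (p T : ℕ) : ℝ := (∑ i ∈ range p, z (T + i)) / p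

namespace EvPeriodicFrom

variable {z : ℕ → ℝ} {p T : ℕ}

lemma apply_add_mul (hz : EvPeriodicFrom z p T) (k : ℕ) {t : ℕ} (ht : T ≤ t) :
    z (t + p * k) = z t := by
  induction k with
  | zero => simp
  | succ k ih => rw [mul_add_one, ← add_assoc, hz.2 _ (by omega), ih]

lemma mul (hz : EvPeriodicFrom z p T) {k : ℕ} (hk : 1 ≤ k) : EvPeriodicFrom z (p * k) T :=
  ⟨Nat.one_le_iff_ne_zero.2 (Nat.mul_ne_zero (by have := hz.1; omega) (by omega)),
    fun _ ht => hz.apply_add_mul k ht⟩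

lemma mono (hz : EvPeriodicFrom z p T) {T' : ℕ} (h : T ≤ T') : EvPeriodicFrom z p T' :=
  ⟨hz.1, fun t ht => hz.2 t (h.trans ht)⟩

lemma sub {w : ℕ → ℝ} (hz : EvPeriodicFrom z p T) (hw : EvPeriodicFrom w p T) :
    EvPeriodicFrom (z - w) p T :=
  ⟨hz.1, fun t ht => by simp only [Pi.sub_apply, hz.2 t ht, hw.2 t ht]⟩

lemma comp_succ (hz : EvPeriodicFrom z p T) : EvPeriodicFrom (fun t => z (t + 1)) p T :=
  ⟨hz.1, fun t ht => show z (t + p + 1) = z (t + 1) by rw [add_right_comm, hz.2 _ (by omega)]⟩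

lemma exists_lt_eq (hz : EvPeriodicFrom z p T) (t : ℕ) : ∃ s < T + p, z t = z s := by
  induction t using Nat.strong_induction_on with
  | _ t ih =>
    by_cases ht : t < T + p
    · exact ⟨t, ht, rfl⟩
    · obtain ⟨s, hs, he⟩ := ih (t - p) (by have := hz.1; omega)
      refine ⟨s, hs, ?_⟩
      rw [← he, ← hz.2 (t - p) (by omega), Nat.sub_add_cancel (by omega)]

lemma bdd (hz : EvPeriodicFrom z p T) : Bdd z := by
  refine ⟨∑ s ∈ range (T + p), |z s|, fun t => ?_⟩
  obtain ⟨s, hs, he⟩ := hz.exists_lt_eq t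
  rw [he]
  exact Finset.single_le_sum (f := fun s => |z s|) (fun _ _ => abs_nonneg _)
    (Finset.mem_range.2 hs)

lemma window_sum_eq (hz : EvPeriodicFrom z p T) {t : ℕ} (ht : T ≤ t) :
    ∑ i ∈ range p, z (t + i) = ∑ i ∈ range p, z (T + i) := by
  induction t, ht using Nat.le_induction with
  | base => rfl
  | succ t ht ih =>
    have h := Finset.sum_range_succ' (fun i => z (t + i)) p
    rw [Finset.sum_range_succ, hz.2 t ht, add_zero] at h
    simp only [← add_assoc] at h
    rw [← ih]
    simp only [add_right_comm t 1]
    linarith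

lemma psum_sub_periodMean (hz : EvPeriodicFrom z p T) :
    EvPeriodicFrom (psum (fun t => z t - periodMean z p T)) p T := by
  refine ⟨hz.1, fun t ht => ?_⟩
  have hp : (p : ℝ) ≠ 0 := Nat.cast_ne_zero.2 (by have := hz.1; omega)
  rw [psum_add_length, Finset.sum_sub_distrib, hz.window_sum_eq ht, Finset.sum_const,
    Finset.card_range, nsmul_eq_mul, periodMean, mul_div_cancel₀ _ hp, sub_self, add_zero]

lemma avgTo (hz : EvPeriodicFrom z p T) : AvgTo z (periodMean z p T) := by
  have h := (hz.psum_sub_periodMean.bdd.tendsto_div_natCast).add_const (periodMean z p T)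
  rw [zero_add] at h
  refine h.congr' ?_
  filter_upwards [eventually_ne_atTop 0] with n hn
  have hn : (n : ℝ) ≠ 0 := Nat.cast_ne_zero.2 hn
  rw [psum_sub_const]
  field_simp
  ring

lemma bddPartialSums_sub_periodMean (hz : EvPeriodicFrom z p T) :
    BddPartialSums (fun t => z t - periodMean z p T) :=
  hz.psum_sub_periodMean.bdd

lemma cesaroSummable_sub_periodMean (hz : EvPeriodicFrom z p T) :
    CesaroSummable (fun t => z t - periodMean z p T) :=
  ⟨_, tendsto_cesaroAvg_iff.2 hz.psum_sub_periodMean.comp_succ.avgTo⟩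

end EvPeriodicFrom

lemma EvPeriodic.sub {z w : ℕ → ℝ} (hz : EvPeriodic z) (hw : EvPeriodic w) :
    EvPeriodic (z - w) := by
  obtain ⟨p, T, hz⟩ := hz
  obtain ⟨q, S, hw⟩ := hw
  refine ⟨p * q, max T S, ((hz.mul hw.1).mono (le_max_left T S)).sub ?_⟩
  rw [mul_comm]
  exact (hw.mul hz.1).mono (le_max_right T S)

lemma UPlus.sub {u v : ℕ → ℝ} (hu : UPlus u) (hv : UPlus v) : UPlus (u - v) := by
  obtain ⟨hub, w, Δ, rfl, hw, hΔc, hΔb⟩ := hu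
  obtain ⟨hvb, w', Δ', rfl, hw', hΔc', hΔb'⟩ := hv
  exact ⟨hub.sub hvb, w - w', Δ - Δ', by abel, hw.sub hw', hΔc.sub hΔc', hΔb.sub hΔb'⟩

lemma UPlus.exists_eq_const_add {u : ℕ → ℝ} (hu : UPlus u) :
    ∃ (c : ℝ) (Δ : ℕ → ℝ), u = (fun t => c + Δ t) ∧ BddPartialSums Δ ∧ CesaroSummable Δ := by
  obtain ⟨-, w, Δ, rfl, ⟨p, T, hw⟩, hΔc, hΔb⟩ := hu
  refine ⟨periodMean w p T, Δ + fun t => w t - periodMean w p T, ?_,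
    hΔb.add hw.bddPartialSums_sub_periodMean, hΔc.add hw.cesaroSummable_sub_periodMean⟩
  funext t
  simp only [Pi.add_apply]
  ring

noncomputable def spread (L : ℝ) (n : ℕ) : ℕ → ℝ := fun t => if t < n then L / n else 0

section Spread

variable {L : ℝ} {n : ℕ}

lemma psum_spread (L : ℝ) (n k : ℕ) : psum (spread L n) k = min k n * (L / n) := by
  induction k with
  | zero => simp [psum_zero]
  | succ k ih =>
    rw [psum_succ, ih, spread]
    split_ifs with hk
    · rw [min_eq_left hk.le, min_eq_left hk]
      push_cast
      ring
    · rw [min_eq_right (not_lt.1 hk), min_eq_right (by omega)]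
      ring

lemma bddPartialSums_spread (L : ℝ) (n : ℕ) : BddPartialSums (spread L n) := by
  refine ⟨|L|, fun k => ?_⟩
  rcases n.eq_zero_or_pos with rfl | hn
  · simp [psum_spread]
  have hn : (0 : ℝ) < n := Nat.cast_pos.2 hn
  rw [psum_spread, abs_mul, abs_div, Nat.abs_cast, Nat.abs_cast, mul_div_assoc',
    div_le_iff₀ hn, mul_comm]
  gcongr
  exact_mod_cast min_le_right k n

lemma tendsto_cesaroAvg_spread (hn : 0 < n) :
    Tendsto (cesaroAvg (spread L n)) atTop (𝓝 L) := by
  have hper : EvPeriodicFrom (fun t => psum (spread L n) (t + 1)) 1 n :=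
    ⟨le_rfl, fun t ht => by simp only [psum_spread, min_eq_right (by omega : n ≤ t + 1 + 1),
      min_eq_right (by omega : n ≤ t + 1)]⟩
  have hval : periodMean (fun t => psum (spread L n) (t + 1)) 1 n = L := by
    have hn : (n : ℝ) ≠ 0 := Nat.cast_ne_zero.2 hn.ne'
    simp [periodMean, psum_spread, mul_div_cancel₀ _ hn]
  have h := hper.avgTo
  rwa [hval] at h

lemma abs_spread_le (L : ℝ) (n t : ℕ) : |spread L n t| ≤ |L| / n := by
  unfold spread
  split_ifs <;> simp [abs_div, div_nonneg]

lemma exists_spread_const_add_nonneg_or_nonpos (c L : ℝ) : ∃ n : ℕ, 0 < n ∧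
    ((∀ t, 0 ≤ c + spread L n t) ∨ ∀ t, c + spread L n t ≤ 0) := by
  obtain ⟨n, hn⟩ := exists_nat_gt (|L| / |c|)
  have hn0 : 0 < n := by exact_mod_cast (by positivity : 0 ≤ |L| / |c|).trans_lt hn
  refine ⟨n, hn0, ?_⟩
  have hsmall (hc : c ≠ 0) (t : ℕ) : |spread L n t| ≤ |c| := by
    refine (abs_spread_le L n t).trans (div_le_of_le_mul₀ n.cast_nonneg (abs_nonneg c) ?_)
    rw [div_lt_iff₀ (abs_pos.2 hc)] at hn
    linarith
  rcases lt_trichotomy c 0 with hc | rfl | hc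
  · right
    intro t
    have := hsmall hc.ne t
    rw [abs_of_neg hc] at this
    linarith [le_abs_self (spread L n t)]
  · simp only [zero_add, spread]
    rcases le_total 0 L with hL | hL
    · exact Or.inl fun t => by split_ifs <;> positivity
    · exact Or.inr fun t => by
        split_ifs
        exacts [div_nonpos_of_nonpos_of_nonneg hL n.cast_nonneg, le_rfl]
  · left
    intro t
    have := hsmall hc.ne' t
    rw [abs_of_pos hc] at this
    linarith [neg_abs_le (spread L n t)]

end Spread

section Preference

variable {R : (ℕ → ℝ) → (ℕ → ℝ) → Prop}

lemma indiff_zero_of_tendsto_cesaroAvg_zero (hA2 : AxiomA2 R) (hA3 : AxiomA3 R) {Δ : ℕ → ℝ}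
    (hΔ : BddPartialSums Δ) (h0 : Tendsto (cesaroAvg Δ) atTop (𝓝 0)) :
    R Δ 0 ∧ R 0 Δ := by
  have hcons : _root_.cons 0 (fun t => psum Δ (t + 1)) = psum Δ := by
    funext t
    cases t <;> simp [_root_.cons, psum_zero]
  have hsub : (fun t => psum Δ (t + 1)) + -psum Δ = Δ := by
    funext t
    simp [psum_succ]
  obtain ⟨hS, hS'⟩ := hA3 _ 0 hΔ.bdd_psum_succ h0
  rw [hcons] at hS hS'
  have hneg : Bdd (-psum Δ) := Bdd.neg hΔ
  have h1 := hA2 _ _ _ hΔ.bdd_psum_succ hΔ hneg hS'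
  have h2 := hA2 _ _ _ hΔ hΔ.bdd_psum_succ hneg hS
  rw [hsub, add_neg_cancel] at h1 h2
  exact ⟨h1, h2⟩

lemma rel_zero_of_rel_of_nonneg (htrans : TransOn R) (hA1 : AxiomA1 R) {d g : ℕ → ℝ}
    (hd : Bdd d) (hg : Bdd g) (hdg : R d g) (hg0 : ∀ t, 0 ≤ g t) : R d 0 := by
  by_cases h : g = 0
  · rwa [h] at hdg
  · obtain ⟨t, ht⟩ := Function.ne_iff.1 h
    exact htrans _ _ _ hd hg bdd_zero hdg
      (hA1 g 0 hg bdd_zero hg0 ⟨t, (hg0 t).lt_of_ne' ht⟩).1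

lemma zero_rel_of_rel_of_nonpos (htrans : TransOn R) (hA1 : AxiomA1 R) {d g : ℕ → ℝ}
    (hd : Bdd d) (hg : Bdd g) (hgd : R g d) (hg0 : ∀ t, g t ≤ 0) : R 0 d := by
  by_cases h : g = 0
  · rwa [h] at hgd
  · obtain ⟨t, ht⟩ := Function.ne_iff.1 h
    exact htrans _ _ _ bdd_zero hg hd
      (hA1 0 g bdd_zero hg hg0 ⟨t, (hg0 t).lt_of_ne ht⟩).1 hgd

lemma rel_zero_or_zero_rel_of_const_add (htrans : TransOn R) (hA1 : AxiomA1 R)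
    (hA2 : AxiomA2 R) (hA3 : AxiomA3 R) {c : ℝ} {Δ : ℕ → ℝ}
    (hΔb : BddPartialSums Δ) (hΔc : CesaroSummable Δ) :
    R (fun t => c + Δ t) 0 ∨ R 0 (fun t => c + Δ t) := by
  obtain ⟨L, hL⟩ := hΔc
  obtain ⟨n, hn, hsign⟩ := exists_spread_const_add_nonneg_or_nonpos c L
  set g : ℕ → ℝ := fun t => c + spread L n t
  have hg : Bdd g := (bdd_const c).add (bddPartialSums_spread L n).bdd
  have hd : Bdd (fun t => c + Δ t) := (bdd_const c).add hΔb.bdd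
  have hΔ' := hΔb.sub (bddPartialSums_spread L n)
  obtain ⟨hΔ'0, h0Δ'⟩ := indiff_zero_of_tendsto_cesaroAvg_zero hA2 hA3 hΔ'
    (by simpa only [← cesaroAvg_sub, sub_self] using hL.sub (tendsto_cesaroAvg_spread (L := L) hn))
  have hdecomp : Δ - spread L n + g = fun t => c + Δ t := by
    funext t
    simp only [g, Pi.add_apply, Pi.sub_apply]
    ring
  have hdg := hA2 _ _ g hΔ'.bdd bdd_zero hg hΔ'0
  have hgd := hA2 _ _ g bdd_zero hΔ'.bdd hg h0Δ'
  rw [zero_add, hdecomp] at hdg hgd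
  rcases hsign with hpos | hneg
  · exact Or.inl (rel_zero_of_rel_of_nonneg htrans hA1 hd hg hdg hpos)
  · exact Or.inr (zero_rel_of_rel_of_nonpos htrans hA1 hd hg hgd hneg)

end Preference

theorem stmt_10_general (R : (ℕ → ℝ) → (ℕ → ℝ) → Prop)
    (htrans : TransOn R)
    (hA1 : AxiomA1 R) (hA2 : AxiomA2 R) (hA3 : AxiomA3 R)
    (u v : ℕ → ℝ) (hu : UPlus u) (hv : UPlus v)
    (h : ¬ R u v) : StrictPref R v u := by
  refine ⟨?_, h⟩
  have hb : Bdd (u - v) := hu.1.sub hv.1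
  obtain ⟨c, Δ, hcΔ, hΔb, hΔc⟩ := (hu.sub hv).exists_eq_const_add
  rcases rel_zero_or_zero_rel_of_const_add htrans hA1 hA2 hA3 hΔb hΔc with huv | hvu
  · rw [← hcΔ] at huv
    exact absurd (by simpa using hA2 _ _ v hb bdd_zero hv.1 huv) h
  · rw [← hcΔ] at hvu
    simpa using hA2 _ _ v bdd_zero hb hv.1 hvu

/-- a preference relation satisfying A1–A3 is complete on 𝒰₊. -/
theorem stmt_10 (R : (ℕ → ℝ) → (ℕ → ℝ) → Prop)
    (hrefl : ReflOn R) (htrans : TransOn R)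
    (hA1 : AxiomA1 R) (hA2 : AxiomA2 R) (hA3 : AxiomA3 R)
    (u v : ℕ → ℝ) (hu : UPlus u) (hv : UPlus v)
    (h : ¬ R u v) : StrictPref R v u :=
  stmt_10_general R htrans hA1 hA2 hA3 u v hu hv h
end

section
/- Let ≿ be a preference relation (reflexive and transitive) on the set 𝒰 of bounded real sequences satisfying axioms A1, A2 and A3. Let u, v ∈ 𝒰 and suppose u − v = w + Δ, where w is eventually periodic with period p from time T onward, the sum of w over one period is positive (∑_{t=T}^{T+p−1} w_t > 0), and the series ∑_{t=1}^∞ Δ_t is Cesàro-summable and has bounded partial sums. Then u ≻ v. -/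
open Filter Finset Topology

lemma window_const (y : ℕ → ℝ) (p T : ℕ)
    (hper : ∀ t, T ≤ t → y (t + p) = y t) :
    ∀ n, T ≤ n → ∑ i ∈ Finset.range p, y (n + i) = ∑ i ∈ Finset.range p, y (T + i) := by
  intro n hn
  induction n, hn using Nat.le_induction with
  | base => rfl
  | succ n hn ih =>
    rw [← ih]
    have h1 := Finset.sum_range_succ' (fun i => y (n + i)) p
    have h2 := Finset.sum_range_succ (fun i => y (n + i)) p
    have h3 : y (n + p) = y (n + 0) := by simpa using hper n hn
    have h4 : ∀ i ∈ Finset.range p, y (n + 1 + i) = y (n + (i + 1)) := by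
      intro i _; congr 1; omega
    rw [Finset.sum_congr rfl h4]
    simp only [h3] at h2
    linarith [h1, h2]

lemma evp_bdd (y : ℕ → ℝ) (p T : ℕ) (hp : 1 ≤ p)
    (hper : ∀ t, T ≤ t → y (t + p) = y t) : Bdd y := by
  refine ⟨∑ s ∈ Finset.range (T + p), |y s|, ?_⟩
  intro t
  induction t using Nat.strong_induction_on with
  | _ t ih =>
    by_cases h : t < T + p
    · exact Finset.single_le_sum (f := fun s => |y s|) (fun s _ => abs_nonneg _)
        (Finset.mem_range.mpr h)
    · push_neg at h
      have h1 : y t = y (t - p) := by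
        have := hper (t - p) (by omega)
        rwa [Nat.sub_add_cancel (by omega)] at this
      rw [h1]; exact ih (t - p) (by omega)

lemma evp_avg (y : ℕ → ℝ) (p T : ℕ) (hp : 1 ≤ p)
    (hper : ∀ t, T ≤ t → y (t + p) = y t) :
    AvgTo y ((∑ i ∈ Finset.range p, y (T + i)) / p) := by
  set c : ℝ := ∑ i ∈ Finset.range p, y (T + i) with hc
  set D : ℕ → ℝ := fun n => psum y n - n * (c / p) with hD
  have hp0 : (p : ℝ) ≠ 0 := by
    have : (0:ℝ) < p := by exact_mod_cast hp
    linarith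
  have hDper : ∀ n, T ≤ n → D (n + p) = D n := by
    intro n hn
    have hsplit : psum y (n + p) = psum y n + ∑ i ∈ Finset.range p, y (n + i) := by
      simp [psum, Finset.sum_range_add]
    have hw := window_const y p T hper n hn
    simp only [hD]
    rw [hsplit, hw, ← hc]
    push_cast
    field_simp
    ring
  obtain ⟨B, hB⟩ := evp_bdd D p T hp hDper
  have h0 : Tendsto (fun n : ℕ => D n / n) atTop (nhds 0) := by
    refine squeeze_zero_norm (f := fun n : ℕ => D n / n) (a := fun n : ℕ => B / n) ?_
      (tendsto_const_div_atTop_nhds_zero_nat B)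
    intro n
    rcases Nat.eq_zero_or_pos n with h | h
    · simp [h]
    · have hn0 : (0:ℝ) < n := by exact_mod_cast h
      rw [Real.norm_eq_abs, abs_div, abs_of_nonneg (le_of_lt hn0)]
      exact (div_le_div_iff_of_pos_right hn0).mpr (hB n)
  have hmain : Tendsto (fun n : ℕ => D n / n + c / p) atTop (nhds (0 + c / p)) :=
    h0.add tendsto_const_nhds
  rw [zero_add] at hmain
  unfold AvgTo
  apply hmain.congr'
  filter_upwards [eventually_ge_atTop 1] with n hn
  have hn0 : (n : ℝ) ≠ 0 := by
    have : (0:ℝ) < n := by exact_mod_cast hn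
    linarith
  simp only [hD]
  field_simp
  ring

lemma avgTo_add {y z : ℕ → ℝ} {b1 b2 : ℝ} (h1 : AvgTo y b1) (h2 : AvgTo z b2) :
    AvgTo (fun t => y t + z t) (b1 + b2) := by
  have h := h1.add h2
  apply h.congr
  intro n
  simp [psum, Finset.sum_add_distrib, add_div]

lemma avgTo_sub {y z : ℕ → ℝ} {b1 b2 : ℝ} (h1 : AvgTo y b1) (h2 : AvgTo z b2) :
    AvgTo (fun t => y t - z t) (b1 - b2) := by
  have h := h1.sub h2
  apply h.congr
  intro n
  simp [psum, Finset.sum_sub_distrib, sub_div]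

lemma bdd_cons (c : ℝ) {u : ℕ → ℝ} (hu : Bdd u) : Bdd (cons c u) := by
  obtain ⟨C, hC⟩ := hu
  have hC0 : 0 ≤ C := le_trans (abs_nonneg _) (hC 0)
  refine ⟨|c| + C, fun t => ?_⟩
  cases t with
  | zero => simp [_root_.cons]; linarith [abs_nonneg c]
  | succ s =>
    simp only [_root_.cons, Nat.succ_ne_zero, if_false, Nat.add_sub_cancel]
    linarith [hC s, abs_nonneg c]

/-- if `u - v = w + Δ` with `w` eventually periodic of positive
period-sum and `∑ Δ_t` Cesàro-summable with bounded partial sums, then `u ≻ v`. -/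
theorem stmt_16 (R : (ℕ → ℝ) → (ℕ → ℝ) → Prop)
    (hrefl : ReflOn R) (htrans : TransOn R)
    (hA1 : AxiomA1 R) (hA2 : AxiomA2 R) (hA3 : AxiomA3 R)
    (u v w Δ : ℕ → ℝ) (hu : Bdd u) (hv : Bdd v)
    (hd : u - v = w + Δ) (p T : ℕ) (hp : 1 ≤ p)
    (hper : ∀ t, T ≤ t → w (t + p) = w t)
    (hpos : 0 < ∑ i ∈ Finset.range p, w (T + i))
    (hc : CesaroSummable Δ) (hb : BddPartialSums Δ) :
    StrictPref R u v := by
  obtain ⟨Cu, hCu⟩ := hu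
  obtain ⟨Cv, hCv⟩ := hv
  obtain ⟨CΔ, hCΔ⟩ := hb
  obtain ⟨L, hL⟩ := hc
  have hu' : Bdd u := ⟨Cu, hCu⟩
  have hv' : Bdd v := ⟨Cv, hCv⟩
  have hdt : ∀ t, u t - v t = w t + Δ t := by
    intro t
    have := congrFun hd t
    simpa using this
  set a : ℝ := (∑ i ∈ Finset.range p, w (T + i)) / p with ha_def
  have hpR : (0:ℝ) < p := by exact_mod_cast hp
  have ha : 0 < a := div_pos hpos hpR
  have hpa : (p : ℝ) * a = ∑ i ∈ Finset.range p, w (T + i) := by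
    rw [ha_def]; field_simp
  -- the sequence of partial sums of w - a
  set P : ℕ → ℝ := fun t => ∑ s ∈ Finset.range (t + 1), (w s - a) with hP_def
  have hPper : ∀ t, T ≤ t → P (t + p) = P t := by
    intro t ht
    have hsplit : ∑ s ∈ Finset.range (t + 1 + p), (w s - a)
        = ∑ s ∈ Finset.range (t + 1), (w s - a)
          + ∑ i ∈ Finset.range p, (w (t + 1 + i) - a) :=
      Finset.sum_range_add _ _ _
    have hw : ∑ i ∈ Finset.range p, w (t + 1 + i) = ∑ i ∈ Finset.range p, w (T + i) :=
      window_const w p T hper (t + 1) (by omega)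
    have hsum : ∑ i ∈ Finset.range p, (w (t + 1 + i) - a) = 0 := by
      rw [Finset.sum_sub_distrib, hw, Finset.sum_const, Finset.card_range, nsmul_eq_mul]
      linarith
    have heq : t + p + 1 = t + 1 + p := by omega
    simp only [hP_def, heq]
    rw [hsplit, hsum, add_zero]
  set b : ℝ := (∑ i ∈ Finset.range p, P (T + i)) / p with hb_def
  have hPavg : AvgTo P b := evp_avg P p T hp hPper
  have hPbdd : Bdd P := evp_bdd P p T hp hPper
  set M : ℝ := max 0 (-(a + b + L)) with hM_def
  have hM0 : 0 ≤ M := le_max_left _ _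
  have hM1 : -(a + b + L) ≤ M := le_max_right _ _
  set f : ℕ → ℝ := fun t => max (M - t * (a / 2)) 0 with hf_def
  obtain ⟨N, hN⟩ : ∃ N : ℕ, M ≤ N * (a / 2) := by
    obtain ⟨N, hN⟩ := exists_nat_ge (M / (a / 2))
    refine ⟨N, ?_⟩
    rw [div_le_iff₀ (by linarith)] at hN
    linarith
  have hfzero : ∀ t, N ≤ t → f t = 0 := by
    intro t ht
    have htR : (N : ℝ) ≤ t := by exact_mod_cast ht
    have hle : M - t * (a / 2) ≤ 0 := by nlinarith
    simp only [hf_def]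
    exact max_eq_right hle
  have hfper : ∀ t, N ≤ t → f (t + 1) = f t := by
    intro t ht; rw [hfzero _ (by omega), hfzero _ ht]
  have hfavg : AvgTo f 0 := by
    have h := evp_avg f 1 N le_rfl hfper
    simpa [hfzero N le_rfl] using h
  have hfbdd : ∀ t, 0 ≤ f t ∧ f t ≤ M := by
    intro t
    constructor
    · exact le_max_right _ _
    · have h1 : (0:ℝ) ≤ (t : ℝ) * (a / 2) := by positivity
      exact max_le (by linarith) hM0
  have hfstep : ∀ s : ℕ, f s ≤ f (s + 1) + a / 2 := by
    intro s
    have hfs1lb : M - ((s:ℝ) + 1) * (a / 2) ≤ f (s + 1) := by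
      have h : f (s + 1) = max (M - ((s + 1 : ℕ) : ℝ) * (a / 2)) 0 := rfl
      rw [h]
      refine le_trans (le_of_eq ?_) (le_max_left _ _)
      push_cast; ring
    have h2 := (hfbdd (s + 1)).1
    have hfs : f s = max (M - (s : ℝ) * (a / 2)) 0 := rfl
    rw [hfs]
    apply max_le <;> linarith
  -- partial sums of Δ
  set S : ℕ → ℝ := fun t => psum Δ (t + 1) with hS_def
  have hSavg : AvgTo S L := hL
  have hSbdd : Bdd S := ⟨CΔ, fun t => hCΔ (t + 1)⟩
  -- the potential sequence
  set x : ℕ → ℝ := fun t => P t + S t - f t with hx_def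
  have hxavg : AvgTo x (b + L) := by
    have h := avgTo_sub (avgTo_add hPavg hSavg) hfavg
    rw [sub_zero] at h
    rw [hx_def]
    exact h
  have hxbdd : Bdd x := by
    obtain ⟨CP, hCP⟩ := hPbdd
    obtain ⟨CS, hCS⟩ := hSbdd
    refine ⟨CP + CS + M, fun t => ?_⟩
    have h1 := abs_le.mp (hCP t)
    have h2 := abs_le.mp (hCS t)
    have h3 := hfbdd t
    simp only [hx_def]
    exact abs_le.mpr ⟨by linarith, by linarith⟩
  have hA3x := hA3 x (b + L) hxbdd hxavg
  have hconsbdd : Bdd (cons (b + L) x) := bdd_cons _ hxbdd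
  set α : ℕ → ℝ := fun t => u t - x t with hα_def
  have hαbdd : Bdd α := by
    obtain ⟨Cx, hCx⟩ := hxbdd
    refine ⟨Cu + Cx, fun t => ?_⟩
    have h1 := abs_le.mp (hCu t)
    have h2 := abs_le.mp (hCx t)
    simp only [hα_def]
    exact abs_le.mpr ⟨by linarith, by linarith⟩
  have h1 : R (cons (b + L) x + α) (x + α) :=
    hA2 _ _ _ hconsbdd hxbdd hαbdd hA3x.1
  have h2 : R (x + α) (cons (b + L) x + α) :=
    hA2 _ _ _ hxbdd hconsbdd hαbdd hA3x.2
  have hxu : x + α = u := by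
    funext t
    simp only [Pi.add_apply, hα_def]
    ring
  rw [hxu] at h1 h2
  set E : ℕ → ℝ := cons (b + L) x + α with hE_def
  have hEbdd : Bdd E := by
    obtain ⟨C1, hC1⟩ := hconsbdd
    obtain ⟨C2, hC2⟩ := hαbdd
    refine ⟨C1 + C2, fun t => ?_⟩
    have h1 := abs_le.mp (hC1 t)
    have h2 := abs_le.mp (hC2 t)
    simp only [hE_def, Pi.add_apply]
    exact abs_le.mpr ⟨by linarith, by linarith⟩
  -- pointwise computations
  have hE0 : E 0 - v 0 = a + b + L + M := by
    have hcons0 : cons (b + L) x 0 = b + L := rfl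
    have hP0 : P 0 = w 0 - a := by simp [hP_def]
    have hS0 : S 0 = Δ 0 := by simp [hS_def, psum]
    have hf0 : f 0 = M := by
      simp only [hf_def]
      push_cast
      rw [zero_mul, sub_zero]
      exact max_eq_left hM0
    have hx0 : x 0 = P 0 + S 0 - f 0 := rfl
    have hE0' : E 0 = (b + L) + (u 0 - x 0) := by
      simp only [hE_def, Pi.add_apply, hα_def, hcons0]
    rw [hE0', hx0, hP0, hS0, hf0]
    have := hdt 0
    linarith
  have hEt : ∀ s : ℕ, E (s + 1) - v (s + 1) = a - f s + f (s + 1) := by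
    intro s
    have hconsS : cons (b + L) x (s + 1) = x s := by
      simp [_root_.cons]
    have hP1 : P (s + 1) = P s + (w (s + 1) - a) := by
      simp only [hP_def]
      rw [Finset.sum_range_succ]
    have hS1 : S (s + 1) = S s + Δ (s + 1) := by
      simp only [hS_def, psum]
      rw [Finset.sum_range_succ]
    have hxs : x s = P s + S s - f s := rfl
    have hxs1 : x (s + 1) = P (s + 1) + S (s + 1) - f (s + 1) := rfl
    have hE1 : E (s + 1) = x s + (u (s + 1) - x (s + 1)) := by
      simp only [hE_def, Pi.add_apply, hα_def, hconsS]
    rw [hE1, hxs, hxs1, hP1, hS1]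
    have := hdt (s + 1)
    linarith
  have hle : ∀ t, v t ≤ E t := by
    intro t
    cases t with
    | zero => linarith [hE0]
    | succ s => linarith [hEt s, hfstep s]
  have hlt : v 1 < E 1 := by
    have h := hEt 0
    have h' := hfstep 0
    have : (0:ℝ) < a / 2 := by linarith
    linarith
  obtain ⟨h5, h6⟩ := hA1 E v hEbdd hv' hle ⟨1, hlt⟩
  constructor
  · exact htrans u E v hu' hEbdd hv' h2 h5
  · intro hvu
    exact h6 (htrans v u E hv' hu' hEbdd hvu h2)
end
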